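/- Let α ∈ [0,1/2) and β ∈ [0,1], and let x_1,…,x_k be positive integers with Σ = Σ_i x_i. Consider the financial network with banks v_1,…,v_k, S, T, L; external assets e_{v_i} = x_i and all other external assets 0; liabilities l_{v_i,S} = 4x_i/3 and l_{v_i,T} = 2x_i/3 for each i, l_{S,L} = (2+α)·Σ/3, and all other liabilities 0; default costs α, β. Then there exists a cash injection t ≥ 0 with total Σ_b t_b ≤ Σ/2 under which bank S is solvent under the maximal clearing payments (i.e., its total assets are at least its liability (2+α)·Σ/3) if and only if there exists a subset B ⊆ {1,…,k} with Σ_{i∈B} x_i = Σ/2. -/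
import Mathlib


open Finset

/-- `p` is a proportional clearing payment matrix for the network with external assets `e`,
liabilities `l` and default costs `α, β`. -/
def IsClearing {ι : Type*} [Fintype ι] (α β : ℝ) (e : ι → ℝ) (l : ι → ι → ℝ)
    (p : ι → ι → ℝ) : Prop :=
  (∀ i j, 0 ≤ p i j) ∧ (∀ i j, p i j ≤ l i j) ∧
  (∀ i, (∑ j, l i j) ≤ e i + (∑ j, p j i) → ∀ j, p i j = l i j) ∧
  (∀ i, e i + (∑ j, p j i) < (∑ j, l i j) →
    ∀ j, p i j = (α * e i + β * (∑ k, p k i)) * l i j / (∑ k, l i k))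

/-- `p` is the maximal clearing payment matrix. -/
def IsMaxClearing {ι : Type*} [Fintype ι] (α β : ℝ) (e : ι → ℝ) (l p : ι → ι → ℝ) : Prop :=
  IsClearing α β e l p ∧ ∀ q, IsClearing α β e l q → ∀ i j, q i j ≤ p i j

/-- Banks of the Partition reduction: `Sum.inl i` is bank vᵢ, `Sum.inr 0` is S,
`Sum.inr 1` is T and `Sum.inr 2` is L. -/
abbrev Bank (k : ℕ) := Fin k ⊕ Fin 3

lemma sum_ite_mem_compl {k : ℕ} (B : Finset (Fin k)) (f g : Fin k → ℝ) :
    ∑ i, (if i ∈ B then f i else g i) = ∑ i ∈ B, f i + ∑ i ∈ Bᶜ, g i := by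
  rw [← Finset.sum_add_sum_compl B]
  congr 1
  · exact Finset.sum_congr rfl fun i hi => if_pos hi
  · exact Finset.sum_congr rfl fun i hi => if_neg (Finset.mem_compl.mp hi)

set_option maxHeartbeats 1000000 in
/-- Correctness of the reduction from Partition showing NP-hardness of computing the
minimum budget making agent S solvent, for default costs `α < 1/2`: some cash injection
with budget `Σ/2` makes S solvent (total assets at least its liability `(2+α)·Σ/3`)
iff the x's can be split into two halves of equal sum. -/
theorem partition_reduction_minimum_budget
    (α β : ℝ) (hα₀ : 0 ≤ α) (hα₁ : α < 1/2) (hβ₀ : 0 ≤ β) (hβ₁ : β ≤ 1)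
    (k : ℕ) (hk : 1 ≤ k) (x : Fin k → ℕ) (hx : ∀ i, 0 < x i)
    (S : ℝ) (hS : S = ∑ i, (x i : ℝ))
    (e : Bank k → ℝ)
    (he : e = fun b => match b with
      | Sum.inl i => (x i : ℝ)
      | Sum.inr _ => 0)
    (l : Bank k → Bank k → ℝ)
    (hl : l = fun a b => match a, b with
      | Sum.inl i, Sum.inr j =>
          if j = 0 then 4 * (x i : ℝ) / 3 else if j = 1 then 2 * (x i : ℝ) / 3 else 0
      | Sum.inr j, Sum.inr j' => if j = 0 ∧ j' = 2 then (2 + α) * S / 3 else 0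
      | _, _ => 0) :
    (∃ t : Bank k → ℝ, (∀ b, 0 ≤ t b) ∧ (∑ b, t b) ≤ S / 2 ∧
        ∃ p, IsMaxClearing α β (fun b => e b + t b) l p ∧
          (2 + α) * S / 3 ≤ (e (Sum.inr 0) + t (Sum.inr 0)) + ∑ b, p b (Sum.inr 0))
    ↔ (∃ B : Finset (Fin k), (∑ i ∈ B, (x i : ℝ)) = S / 2) := by
  -- basic facts about e and l
  have hxR : ∀ i, (0:ℝ) < (x i : ℝ) := fun i => by exact_mod_cast hx i
  have hS0 : 0 ≤ S := hS ▸ Finset.sum_nonneg fun i _ => (hxR i).le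
  have hei : ∀ i, e (Sum.inl i) = (x i : ℝ) := fun i => by simp [he]
  have her : ∀ j, e (Sum.inr j) = 0 := fun j => by simp [he]
  have hlv0 : ∀ i, l (Sum.inl i) (Sum.inr 0) = 4 * (x i : ℝ) / 3 := fun i => by simp [hl]
  have hlv1 : ∀ i, l (Sum.inl i) (Sum.inr 1) = 2 * (x i : ℝ) / 3 := fun i => by simp [hl]
  have hlv2 : ∀ i, l (Sum.inl i) (Sum.inr 2) = 0 := fun i => by simp [hl]
  have hlvv : ∀ i i', l (Sum.inl i) (Sum.inl i') = 0 := fun i i' => by simp [hl]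
  have hlSL : l (Sum.inr 0) (Sum.inr 2) = (2 + α) * S / 3 := by simp [hl]
  have hcol : ∀ b i, l b (Sum.inl i) = 0 := fun b i => by cases b <;> simp [hl]
  have hl0 : ∀ a b, 0 ≤ l a b := by
    intro a b
    cases a with
    | inl i =>
      cases b with
      | inl i' => simp [hl]
      | inr j =>
        simp only [hl]
        split_ifs <;> positivity
    | inr j =>
      cases b with
      | inl i' => simp [hl]
      | inr j' =>
        simp only [hl]
        split_ifs <;> positivity
  have hcolS : ∀ j : Fin 3, l (Sum.inr j) (Sum.inr 0) = 0 := fun j => by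
    simp only [hl]
    rw [if_neg]
    rintro ⟨-, h⟩
    exact absurd h (by decide)
  -- row sums of l
  have hrow_v : ∀ i, ∑ j, l (Sum.inl i) j = 2 * (x i : ℝ) := by
    intro i
    rw [Fintype.sum_sum_type, Fin.sum_univ_three, hlv0, hlv1, hlv2,
      Finset.sum_eq_zero fun i' _ => hlvv i i']
    ring
  have hrow_S : ∑ j, l (Sum.inr 0) j = (2 + α) * S / 3 := by
    rw [Fintype.sum_sum_type, Fin.sum_univ_three]
    rw [Finset.sum_eq_zero fun i' _ => hcol _ i', hlSL]
    have h1 : l (Sum.inr 0) (Sum.inr 0) = 0 := by simp [hl]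
    have h2 : l (Sum.inr 0) (Sum.inr 1) = 0 := by simp [hl]
    rw [h1, h2]; ring
  have hrow_T : ∀ j : Fin 3, j ≠ 0 → ∑ b, l (Sum.inr j) b = 0 := by
    intro j hj
    refine Finset.sum_eq_zero fun b _ => ?_
    cases b with
    | inl i => exact hcol _ i
    | inr j' => simp [hl, hj]
  constructor
  · -- forward direction
    rintro ⟨t, ht0, htS, p, ⟨⟨hp0, hpl, hsol, hdef⟩, -⟩, hgoal⟩
    have hpcol : ∀ b i, p b (Sum.inl i) = 0 :=
      fun b i => le_antisymm ((hpl b _).trans_eq (hcol b i)) (hp0 b _)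
    have hin_v : ∀ i, ∑ j, p j (Sum.inl i) = 0 :=
      fun i => Finset.sum_eq_zero fun b _ => hpcol b i
    set B : Finset (Fin k) := Finset.univ.filter (fun i => (x i : ℝ) ≤ t (Sum.inl i)) with hBdef
    have hmemB : ∀ i, i ∈ B ↔ (x i : ℝ) ≤ t (Sum.inl i) := fun i => by simp [hBdef]
    have hpay : ∀ i, p (Sum.inl i) (Sum.inr 0) =
        if i ∈ B then 4 * (x i : ℝ) / 3 else 2 * α * ((x i : ℝ) + t (Sum.inl i)) / 3 := by
      intro i
      split_ifs with h
      · rw [hsol (Sum.inl i) ?_ (Sum.inr 0), hlv0]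
        simp only [hrow_v, hin_v, hei]
        have := (hmemB i).mp h
        linarith
      · rw [hdef (Sum.inl i) ?_ (Sum.inr 0)]
        · simp only [hin_v, hei, hlv0, hrow_v]
          have hxne : (x i : ℝ) ≠ 0 := (hxR i).ne'
          field_simp
          ring
        · simp only [hrow_v, hin_v, hei]
          have := (hmemB i).not.mp h
          push_neg at this
          linarith
    have hpS0 : ∀ j : Fin 3, p (Sum.inr j) (Sum.inr 0) = 0 :=
      fun j => le_antisymm ((hpl _ _).trans_eq (hcolS j)) (hp0 _ _)
    have hsum : ∑ b, p b (Sum.inr 0) =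
        ∑ i ∈ B, 4 * (x i : ℝ) / 3 + ∑ i ∈ Bᶜ, 2 * α * ((x i : ℝ) + t (Sum.inl i)) / 3 := by
      rw [Fintype.sum_sum_type, Fin.sum_univ_three, hpS0 0, hpS0 1, hpS0 2]
      rw [Finset.sum_congr rfl fun i _ => hpay i, sum_ite_mem_compl]
      ring
    -- arithmetic
    set b := ∑ i ∈ B, (x i : ℝ) with hbdef
    set c := ∑ i ∈ Bᶜ, (x i : ℝ) with hcdef
    set tb := ∑ i ∈ B, t (Sum.inl i) with htbdef
    set tc := ∑ i ∈ Bᶜ, t (Sum.inl i) with htcdef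
    have hbc : b + c = S := by rw [hbdef, hcdef, Finset.sum_add_sum_compl, hS]
    have hbtb : b ≤ tb := Finset.sum_le_sum fun i hi => (hmemB i).mp hi
    have htc0 : 0 ≤ tc := Finset.sum_nonneg fun i _ => ht0 _
    have hc0 : 0 ≤ c := Finset.sum_nonneg fun i _ => (hxR i).le
    have htotal : t (Sum.inr 0) + tb + tc ≤ S / 2 := by
      have h1 : ∑ bb, t bb = (∑ i, t (Sum.inl i)) +
          (t (Sum.inr 0) + t (Sum.inr 1) + t (Sum.inr 2)) := by
        rw [Fintype.sum_sum_type, Fin.sum_univ_three]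
      have h2 : ∑ i, t (Sum.inl i) = tb + tc := (Finset.sum_add_sum_compl B _).symm
      have := ht0 (Sum.inr 1)
      have := ht0 (Sum.inr 2)
      rw [h1, h2] at htS
      linarith
    have hsum2 : ∑ i ∈ B, 4 * (x i : ℝ) / 3 = 4 * b / 3 := by
      rw [hbdef, Finset.mul_sum, Finset.sum_div]
    have hsum3 : ∑ i ∈ Bᶜ, 2 * α * ((x i : ℝ) + t (Sum.inl i)) / 3
        = 2 * α * (c + tc) / 3 := by
      rw [show c + tc = ∑ i ∈ Bᶜ, ((x i : ℝ) + t (Sum.inl i)) from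
        (Finset.sum_add_distrib).symm, Finset.mul_sum, Finset.sum_div]
    rw [her, hsum, hsum2, hsum3] at hgoal
    have hceq : c = S - b := by linarith
    rw [hceq] at hgoal
    have htS0 : 0 ≤ t (Sum.inr 0) := ht0 _
    have halphatc : α * tc ≤ tc / 2 := by nlinarith
    refine ⟨B, ?_⟩
    have hble : b ≤ S / 2 := by linarith
    have hbge : S / 2 ≤ b := by
      by_contra h
      push_neg at h
      nlinarith [mul_pos (show (0:ℝ) < 1 - 2*α by linarith)
        (show (0:ℝ) < S/2 - b by linarith)]
    linarith
  · -- backward direction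
    rintro ⟨B, hB⟩
    have hBc : ∑ i ∈ Bᶜ, (x i : ℝ) = S / 2 := by
      have := Finset.sum_add_sum_compl B fun i => (x i : ℝ)
      rw [hB, ← hS] at this
      linarith
    obtain ⟨t, ht_inl, ht_inr⟩ :
        ∃ t : Bank k → ℝ, (∀ i, t (Sum.inl i) = if i ∈ B then (x i : ℝ) else 0) ∧
          (∀ j : Fin 3, t (Sum.inr j) = 0) :=
      ⟨fun bb => match bb with
        | Sum.inl i => if i ∈ B then (x i : ℝ) else 0
        | Sum.inr _ => 0, fun i => rfl, fun j => rfl⟩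
    obtain ⟨c, hc_inl, hc_inr⟩ :
        ∃ c : Bank k → ℝ, (∀ i, c (Sum.inl i) = if i ∈ B then 1 else α / 2) ∧
          (∀ j : Fin 3, c (Sum.inr j) = 1) :=
      ⟨fun bb => match bb with
        | Sum.inl i => if i ∈ B then 1 else α / 2
        | Sum.inr _ => 1, fun i => rfl, fun j => rfl⟩
    obtain ⟨p, hp⟩ : ∃ p : Bank k → Bank k → ℝ, ∀ a bb, p a bb = c a * l a bb :=
      ⟨fun a bb => c a * l a bb, fun a bb => rfl⟩
    have hc0 : ∀ bb, 0 ≤ c bb := by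
      intro bb
      cases bb with
      | inl i => rw [hc_inl]; split_ifs <;> positivity
      | inr j => rw [hc_inr]; norm_num
    have hc1 : ∀ bb, c bb ≤ 1 := by
      intro bb
      cases bb with
      | inl i => rw [hc_inl]; split_ifs <;> linarith
      | inr j => rw [hc_inr]
    have hp0 : ∀ a bb, 0 ≤ p a bb := fun a bb =>
      (hp a bb) ▸ mul_nonneg (hc0 a) (hl0 a bb)
    have hpl : ∀ a bb, p a bb ≤ l a bb := by
      intro a bb
      rw [hp]
      calc c a * l a bb ≤ 1 * l a bb := mul_le_mul_of_nonneg_right (hc1 a) (hl0 a bb)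
      _ = l a bb := one_mul _
    have hpcol : ∀ bb i, p bb (Sum.inl i) = 0 := by
      intro bb i
      rw [hp, hcol, mul_zero]
    have hin_v : ∀ i, ∑ j, p j (Sum.inl i) = 0 :=
      fun i => Finset.sum_eq_zero fun bb _ => hpcol bb i
    have hte : ∀ i, e (Sum.inl i) + t (Sum.inl i)
        = if i ∈ B then 2 * (x i : ℝ) else (x i : ℝ) := by
      intro i
      rw [hei, ht_inl]
      split_ifs <;> ring
    -- incoming payments to S
    have hinS : ∑ bb, p bb (Sum.inr 0) = (2 + α) * S / 3 := by
      rw [Fintype.sum_sum_type, Fin.sum_univ_three]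
      have hz : ∀ j : Fin 3, p (Sum.inr j) (Sum.inr 0) = 0 := by
        intro j; rw [hp, hcolS, mul_zero]
      rw [hz 0, hz 1, hz 2]
      have hpay : ∀ i : Fin k, p (Sum.inl i) (Sum.inr 0) =
          if i ∈ B then 4 * (x i : ℝ) / 3 else α / 2 * (4 * (x i : ℝ) / 3) := by
        intro i
        rw [hp, hc_inl, hlv0]
        split_ifs <;> ring
      rw [Finset.sum_congr rfl fun i _ => hpay i, sum_ite_mem_compl]
      have e1 : ∑ i ∈ B, 4 * (x i : ℝ) / 3 = 4 * (S/2) / 3 := by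
        rw [← hB, Finset.mul_sum, Finset.sum_div]
      have e2 : ∑ i ∈ Bᶜ, α / 2 * (4 * (x i : ℝ) / 3) = α / 2 * (4 * (S/2) / 3) := by
        rw [← hBc, Finset.mul_sum, Finset.sum_div, Finset.mul_sum]
      rw [e1, e2]
      ring
    have hinr : ∀ j : Fin 3, 0 ≤ ∑ bb, p bb (Sum.inr j) :=
      fun j => Finset.sum_nonneg fun bb _ => hp0 bb _
    have hclear : IsClearing α β (fun bb => e bb + t bb) l p := by
      refine ⟨hp0, hpl, ?_, ?_⟩
      · -- solvent rule
        intro i hi j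
        cases i with
        | inl i =>
          by_cases hiB : i ∈ B
          · rw [hp, hc_inl, if_pos hiB, one_mul]
          · exfalso
            simp only [hrow_v, hin_v] at hi
            rw [add_zero, hte, if_neg hiB] at hi
            have := hxR i
            linarith
        | inr j' =>
          rw [hp, hc_inr, one_mul]
      · -- default rule
        intro i hi j
        cases i with
        | inl i =>
          by_cases hiB : i ∈ B
          · exfalso
            simp only [hrow_v, hin_v] at hi
            rw [add_zero, hte, if_pos hiB] at hi
            linarith
          · simp only [hin_v, hrow_v]
            rw [hte, if_neg hiB, hp, hc_inl, if_neg hiB]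
            have hxne : (x i : ℝ) ≠ 0 := (hxR i).ne'
            field_simp
            ring
        | inr j' =>
          exfalso
          simp only at hi
          rw [her, ht_inr, zero_add, zero_add] at hi
          by_cases hj : j' = 0
          · subst hj
            rw [hrow_S, hinS] at hi
            linarith
          · rw [hrow_T j' hj] at hi
            have := hinr j'
            linarith
    refine ⟨t, ?_, ?_, p, ⟨hclear, ?_⟩, ?_⟩
    · intro bb
      cases bb with
      | inl i => rw [ht_inl]; split_ifs <;> positivity
      | inr j => rw [ht_inr]
    · -- budget
      rw [Fintype.sum_sum_type, Fin.sum_univ_three, ht_inr, ht_inr, ht_inr]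
      rw [Finset.sum_congr rfl fun i _ => ht_inl i, sum_ite_mem_compl, hB,
        Finset.sum_const_zero]
      linarith
    · -- maximality
      rintro q ⟨hq0, hql, hqsol, hqdef⟩ i j
      cases i with
      | inl i =>
        by_cases hiB : i ∈ B
        · exact (hql _ _).trans_eq (by rw [hp, hc_inl, if_pos hiB, one_mul])
        · have hqcol : ∀ bb i', q bb (Sum.inl i') = 0 :=
            fun bb i' => le_antisymm ((hql bb _).trans_eq (hcol bb i')) (hq0 bb _)
          have hqin : ∑ jj, q jj (Sum.inl i) = 0 :=
            Finset.sum_eq_zero fun bb _ => hqcol bb i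
          have hq := hqdef (Sum.inl i) (by
            simp only [hrow_v, hqin]
            rw [add_zero, hte, if_neg hiB]
            have := hxR i
            linarith) j
          simp only [hqin, hrow_v] at hq
          rw [hte, if_neg hiB] at hq
          rw [hq, hp, hc_inl, if_neg hiB]
          have hxne : (x i : ℝ) ≠ 0 := (hxR i).ne'
          rw [mul_zero, add_zero, div_le_iff₀ (by positivity)]
          nlinarith [hl0 (Sum.inl i) j, hxR i]
      | inr j' =>
        exact (hql _ _).trans_eq (by rw [hp, hc_inr, one_mul])
    · -- solvency of S
      rw [her, ht_inr, hinS]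
      linarith
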